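/- arXiv:1804.01348 — 4 statements merged into one kernel-verified Lean document; each statement's English description precedes it below -/
import Mathlib

section
/- Let b : ℝ^d → ℝ^d satisfy: (i) ⟨x−y, b(x)−b(y)⟩ ≤ 0 for all x, y; (ii) there exist κ, R > 0 such that ⟨x−y, b(x)−b(y)⟩ ≤ −κ|x−y|² whenever |x| ≥ R and |y| ≥ R; and (iii) b is continuous. Then there exist R̄ ≥ R and κ̄ ∈ (0, κ] such that for all x, y ∈ ℝ^d with |x| ≥ R̄, one has ⟨x−y, b(x)−b(y)⟩ ≤ −κ̄|x−y|². -/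
/-!
Fix `x` with `‖x‖ ≥ 3R`. If also `‖y‖ ≥ R`, hypothesis (ii) applies directly. Otherwise the
segment from `y` to `x` crosses the sphere of radius `R` at some `z`. Splitting
`b x - b y = (b x - b z) + (b z - b y)`, the part along `[y, z]` is nonpositive by (i), and the
part along `[z, x]` is at most `-κ ‖x - z‖ ‖x - y‖` by (ii). Since `‖x‖ ≥ 3R`, the outer piece
`‖x - z‖ ≥ ‖x‖ - R` is at least half of `‖x - y‖ ≤ ‖x‖ + R`, which gives `κbar = κ / 2`.
-/

open scoped RealInnerProductSpace

variable {E : Type*} [NormedAddCommGroup E] [InnerProductSpace ℝ E]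

theorem exists_mem_openSegment_norm_eq {x y : E} {r : ℝ} (hy : ‖y‖ < r) (hx : r < ‖x‖) :
    ∃ z ∈ openSegment ℝ y x, ‖z‖ = r := by
  have hcont : Continuous fun θ : ℝ => ‖y + θ • (x - y)‖ := by fun_prop
  obtain ⟨θ, hθ, hr⟩ :=
    intermediate_value_Ioo zero_le_one hcont.continuousOn (by simpa using And.intro hy hx)
  exact ⟨_, openSegment_eq_image' ℝ y x ▸ ⟨θ, hθ, rfl⟩, hr⟩

section Dissipative

variable {b : E → E} (hdiss : ∀ x y, ⟪x - y, b x - b y⟫ ≤ 0)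
include hdiss

theorem inner_sub_le_of_mem_openSegment {κ : ℝ} {x y z : E} (hz : z ∈ openSegment ℝ y x)
    (hxz : ⟪x - z, b x - b z⟫ ≤ -κ * ‖x - z‖ ^ 2) :
    ⟪x - y, b x - b y⟫ ≤ -κ * ‖x - z‖ * ‖x - y‖ := by
  rw [openSegment_eq_image'] at hz
  obtain ⟨θ, ⟨hθ₀, hθ₁⟩, rfl⟩ := hz
  set z := y + θ • (x - y)
  have h_outer : x - z = (1 - θ) • (x - y) := by module
  have h_inner : z - y = θ • (x - y) := by module
  have h_norm : ‖x - z‖ = (1 - θ) * ‖x - y‖ := by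
    rw [h_outer, norm_smul, Real.norm_of_nonneg (by linarith)]
  have h_near : ⟪x - y, b z - b y⟫ ≤ 0 := by
    have h_scaled : ⟪z - y, b z - b y⟫ = θ * ⟪x - y, b z - b y⟫ := by
      rw [h_inner, real_inner_smul_left]
    exact nonpos_of_mul_nonpos_right (h_scaled ▸ hdiss z y) hθ₀
  have h_far : ⟪x - y, b x - b z⟫ ≤ -κ * ‖x - z‖ * ‖x - y‖ := by
    have h_scaled : ⟪x - z, b x - b z⟫ = (1 - θ) * ⟪x - y, b x - b z⟫ := by
      rw [h_outer, real_inner_smul_left]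
    rw [h_scaled, h_norm] at hxz
    rw [h_norm]
    refine le_of_mul_le_mul_left ?_ (sub_pos.2 hθ₁)
    linarith
  have h_split : b x - b y = (b x - b z) + (b z - b y) := by abel
  rw [h_split, inner_add_right]
  linarith

theorem inner_sub_le_of_three_mul_le_norm {κ R : ℝ} (hκ : 0 ≤ κ)
    (hcontract : ∀ x y, R ≤ ‖x‖ → R ≤ ‖y‖ → ⟪x - y, b x - b y⟫ ≤ -κ * ‖x - y‖ ^ 2)
    {x y : E} (hx : 3 * R ≤ ‖x‖) :
    ⟪x - y, b x - b y⟫ ≤ -(κ / 2) * ‖x - y‖ ^ 2 := by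
  rcases le_or_gt R ‖y‖ with hy | hy
  · have hxR : R ≤ ‖x‖ := by
      rcases le_total 0 R with hR | hR <;> linarith [norm_nonneg x]
    nlinarith [hcontract x y hxR hy, sq_nonneg ‖x - y‖]
  · have hR : 0 < R := (norm_nonneg y).trans_lt hy
    obtain ⟨z, hz, hzR⟩ := exists_mem_openSegment_norm_eq hy (by linarith : R < ‖x‖)
    have hxz := hcontract x z (by linarith) hzR.ge
    have h_half : ‖x - y‖ ≤ 2 * ‖x - z‖ := by
      linarith [norm_sub_le x y, norm_sub_norm_le x z]
    calc ⟪x - y, b x - b y⟫ ≤ -κ * ‖x - z‖ * ‖x - y‖ :=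
          inner_sub_le_of_mem_openSegment hdiss hz hxz
      _ ≤ -(κ / 2) * ‖x - y‖ ^ 2 := by nlinarith [mul_nonneg hκ (norm_nonneg (x - y))]

end Dissipative

theorem stmt0_general {d : ℕ} (b : EuclideanSpace ℝ (Fin d) → EuclideanSpace ℝ (Fin d))
    (κ R : ℝ) (hκ : 0 < κ) (hR : 0 < R)
    (hdiss : ∀ x y : EuclideanSpace ℝ (Fin d), (inner ℝ (x - y) (b x - b y) : ℝ) ≤ 0)
    (hcontract : ∀ x y : EuclideanSpace ℝ (Fin d), R ≤ ‖x‖ → R ≤ ‖y‖ →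
      (inner ℝ (x - y) (b x - b y) : ℝ) ≤ -κ * ‖x - y‖ ^ 2) :
    ∃ Rbar ≥ R, ∃ κbar ∈ Set.Ioc (0 : ℝ) κ, ∀ x y : EuclideanSpace ℝ (Fin d),
      Rbar ≤ ‖x‖ → (inner ℝ (x - y) (b x - b y) : ℝ) ≤ -κbar * ‖x - y‖ ^ 2 :=
  ⟨3 * R, by linarith, κ / 2, ⟨half_pos hκ, half_le_self hκ.le⟩,
    fun _ _ hx => inner_sub_le_of_three_mul_le_norm hdiss hκ.le hcontract hx⟩

theorem stmt0 {d : ℕ} (b : EuclideanSpace ℝ (Fin d) → EuclideanSpace ℝ (Fin d))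
    (hb : Continuous b) (κ R : ℝ) (hκ : 0 < κ) (hR : 0 < R)
    (hdiss : ∀ x y : EuclideanSpace ℝ (Fin d), (inner ℝ (x - y) (b x - b y) : ℝ) ≤ 0)
    (hcontract : ∀ x y : EuclideanSpace ℝ (Fin d), R ≤ ‖x‖ → R ≤ ‖y‖ →
      (inner ℝ (x - y) (b x - b y) : ℝ) ≤ -κ * ‖x - y‖ ^ 2) :
    ∃ Rbar ≥ R, ∃ κbar ∈ Set.Ioc (0 : ℝ) κ, ∀ x y : EuclideanSpace ℝ (Fin d),
      Rbar ≤ ‖x‖ → (inner ℝ (x - y) (b x - b y) : ℝ) ≤ -κbar * ‖x - y‖ ^ 2 :=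
  stmt0_general b κ R hκ hR hdiss hcontract
end

section
/- Let ρ : [0,1] → ℝ^d be a C¹ function with ρ' (t) = F(t) + σ φ(t) where σ > 0, ⟨ρ(t), F(t)⟩ ≤ 0 for all t, and φ(t) = −2ϖ ρ(t)/|ρ(t)|^β on {ρ(t) ≠ 0} (with φ(t) = 0 when ρ(t) = 0), for some β ∈ (0,1) and ϖ = 2|ρ(0)|^β/(σβ). Then ρ(t) = 0 for all t ∈ [1/2, 1]. -/
/-!
Since `⟪ρ, F⟫ ≤ 0` and `⟪ρ, φ⟫ = -2ϖ‖ρ‖^(2-β)`, the function `z = ‖ρ‖²` satisfies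
`z' ≤ -4σϖ z^(1-β/2)`. Hence `z` is nonincreasing and, while it is positive,
`z^(β/2) + 2σϖβ t` is nonincreasing too, so `z(t)^(β/2) ≤ (z(0)^(β/2) - 2σϖβ t) ∨ 0`.
The choice of `ϖ` makes the right-hand side `(‖ρ 0‖^β (1 - 4t)) ∨ 0`, which vanishes for `t ≥ 1/4`.
-/

open Set

lemma antitoneOn_Icc_of_hasDerivAt_nonpos {f f' : ℝ → ℝ} {a b : ℝ}
    (hf : ∀ t ∈ Icc a b, HasDerivAt f (f' t) t) (hf' : ∀ t ∈ Icc a b, f' t ≤ 0) :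
    AntitoneOn f (Icc a b) :=
  antitoneOn_of_hasDerivWithinAt_nonpos (convex_Icc a b)
    (fun t ht => (hf t ht).continuousAt.continuousWithinAt)
    (fun t ht => (hf t (interior_subset ht)).hasDerivWithinAt)
    (fun t ht => hf' t (interior_subset ht))

section Comparison

variable {z z' : ℝ → ℝ} {a b γ k : ℝ}

lemma antitoneOn_rpow_add_mul_of_hasDerivAt_le (hz : ∀ t ∈ Icc a b, HasDerivAt z (z' t) t)
    (hpos : ∀ t ∈ Icc a b, 0 < z t) (hz' : ∀ t ∈ Icc a b, z' t ≤ -k * z t ^ (1 - γ))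
    (hγ : 0 ≤ γ) :
    AntitoneOn (fun t => z t ^ γ + γ * k * t) (Icc a b) := by
  refine antitoneOn_Icc_of_hasDerivAt_nonpos
    (fun t ht => ((hz t ht).rpow_const (Or.inl (hpos t ht).ne')).add
      ((hasDerivAt_id t).const_mul (γ * k))) fun t ht => ?_
  have hzγ : 0 ≤ z t ^ (γ - 1) := Real.rpow_nonneg (hpos t ht).le _
  have hcancel : z t ^ (1 - γ) * z t ^ (γ - 1) = 1 := by
    rw [← Real.rpow_add (hpos t ht)]
    norm_num
  calc z' t * γ * z t ^ (γ - 1) + γ * k * 1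
      ≤ -k * z t ^ (1 - γ) * γ * z t ^ (γ - 1) + γ * k * 1 := by gcongr; exact hz' t ht
    _ = 0 := by linear_combination (-k * γ) * hcancel

theorem rpow_le_max_of_hasDerivAt_le (hz : ∀ t ∈ Icc a b, HasDerivAt z (z' t) t)
    (hnonneg : ∀ t ∈ Icc a b, 0 ≤ z t) (hz' : ∀ t ∈ Icc a b, z' t ≤ -k * z t ^ (1 - γ))
    (hγ : 0 < γ) (hk : 0 ≤ k) {t : ℝ} (ht : t ∈ Icc a b) :
    z t ^ γ ≤ max (z a ^ γ - γ * k * (t - a)) 0 := by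
  rcases (hnonneg t ht).eq_or_lt with hzero | hpos
  · rw [← hzero, Real.zero_rpow hγ.ne']
    exact le_max_right _ _
  have hanti : AntitoneOn z (Icc a b) := antitoneOn_Icc_of_hasDerivAt_nonpos hz fun s hs =>
    (hz' s hs).trans (by nlinarith [Real.rpow_nonneg (hnonneg s hs) (1 - γ)])
  have hsub : Icc a t ⊆ Icc a b := Icc_subset_Icc_right ht.2
  have hposOn : ∀ s ∈ Icc a t, 0 < z s := fun s hs =>
    hpos.trans_le (hanti (hsub hs) ht hs.2)
  have hat : a ∈ Icc a t := left_mem_Icc.2 ht.1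
  have hg := antitoneOn_rpow_add_mul_of_hasDerivAt_le (fun s hs => hz s (hsub hs)) hposOn
    (fun s hs => hz' s (hsub hs)) hγ.le hat (right_mem_Icc.2 ht.1) ht.1
  exact le_max_of_le_left (by simp only at hg; linarith)

end Comparison

lemma real_inner_ite_div_rpow_smul_self {E : Type*} [NormedAddCommGroup E]
    [InnerProductSpace ℝ E] (x : E) [Decidable (x = 0)] (c β : ℝ) (hβ : β < 2) :
    inner ℝ x (if x = 0 then 0 else (c / ‖x‖ ^ β) • x) = c * ‖x‖ ^ (2 - β) := by
  split_ifs with hx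
  · rw [hx, inner_zero_left, norm_zero, Real.zero_rpow (by linarith), mul_zero]
  · have hn : 0 < ‖x‖ := norm_pos_iff.2 hx
    rw [real_inner_smul_right, real_inner_self_eq_norm_sq, Real.rpow_sub hn, Real.rpow_two]
    field_simp

open Classical in
theorem stmt5 {d : ℕ} (ρ F φ : ℝ → EuclideanSpace ℝ (Fin d))
    (σ β ϖ : ℝ) (hσ : 0 < σ) (hβ : β ∈ Set.Ioo (0:ℝ) 1)
    (hϖ : ϖ = 2 * ‖ρ 0‖ ^ β / (σ * β))
    (hderiv : ∀ t ∈ Set.Icc (0:ℝ) 1, HasDerivAt ρ (F t + σ • φ t) t)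
    (hdiss : ∀ t ∈ Set.Icc (0:ℝ) 1, (inner ℝ (ρ t) (F t) : ℝ) ≤ 0)
    (hφ : ∀ t ∈ Set.Icc (0:ℝ) 1,
      φ t = if ρ t = 0 then 0 else (-2 * ϖ / ‖ρ t‖ ^ β) • ρ t) :
    ∀ t ∈ Set.Icc (1/2 : ℝ) 1, ρ t = 0 := by
  obtain ⟨hβ0, hβ1⟩ := hβ
  have hϖ0 : 0 ≤ ϖ := by rw [hϖ]; positivity
  have hnormsq (t p : ℝ) : (‖ρ t‖ ^ 2) ^ p = ‖ρ t‖ ^ (2 * p) := by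
    exact_mod_cast (Real.rpow_natCast_mul (norm_nonneg (ρ t)) 2 p).symm
  have hnormsq_deriv : ∀ t ∈ Icc (0:ℝ) 1, 2 * inner ℝ (ρ t) (F t + σ • φ t)
      ≤ -(4 * σ * ϖ) * (‖ρ t‖ ^ 2) ^ (1 - β / 2) := fun t ht => by
    rw [inner_add_right, real_inner_smul_right, hφ t ht,
      real_inner_ite_div_rpow_smul_self _ _ _ (by linarith), hnormsq, mul_sub, mul_one,
      mul_div_cancel₀ _ two_ne_zero]
    linarith [hdiss t ht]
  intro t ht
  have hcmp := rpow_le_max_of_hasDerivAt_le (fun s hs => (hderiv s hs).norm_sq)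
    (fun s _ => by positivity) hnormsq_deriv (by positivity : 0 < β / 2) (by positivity)
    (Icc_subset_Icc_left (by norm_num) ht)
  have hrate : β / 2 * (4 * σ * ϖ) = 4 * ‖ρ 0‖ ^ β := by
    rw [hϖ]; field_simp
  rw [hnormsq, hnormsq, hrate, mul_div_cancel₀ _ two_ne_zero,
    max_eq_right (by nlinarith [ht.1, Real.rpow_nonneg (norm_nonneg (ρ 0)) β])] at hcmp
  have hzero := le_antisymm hcmp (by positivity)
  rwa [Real.rpow_eq_zero (norm_nonneg _) hβ0.ne', norm_eq_zero] at hzero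
end

section
/- Let h : (−∞, 0) → ℝ be C¹, with lim_{t → 0⁻} h(t) = 0 and h' integrable on [−1, 0). Let φ : [0, ∞) → ℝ be continuous and bounded on [0,1]. Define Ψ(t) = d/dt (∫₀^t h(s−t) φ(s) ds) for t ∈ (0,1]. Then Ψ is well-defined and |Ψ(t)| ≤ ‖φ‖_{∞,[0,1]} ∫₀^{t} |h'(−u)| du ≤ ‖φ‖_{∞,[0,1]} ∫₀^{1} |h'(−u)| du for all t ∈ (0,1]. -/
/-!
Put `k u = -h' (-u)`. Since `h (0⁻) = 0`, the fundamental theorem of calculus gives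
`h (-u) = ∫₀ᵘ k`, and after the substitution `s = τ - u` an integration by parts turns
`∫₀^τ h (s - τ) φ s ds` into `∫₀^τ k u Φ (τ - u) du`, where `Φ` is the primitive of `φ`
vanishing at `0`. In this form the `τ`-dependence sits only in the Lipschitz factor
`Φ (τ - ·)`, so one may differentiate under the integral sign (dominated by `C |k|`), and the
derivative is `Ψ t = ∫₀ᵗ k u φ (t - u) du`, which is bounded by `‖φ‖_∞ ∫₀ᵗ |k|`.
-/

open MeasureTheory Set Filter Topology

theorem hasDerivAt_integral_mul_primitive_comp_sub {μ : Measure ℝ} {k ψ : ℝ → ℝ} {C t : ℝ}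
    (hk : Integrable k μ) (hψ : Integrable ψ) (hψm : Measurable ψ) (hψC : ∀ x, |ψ x| ≤ C)
    (hψt : ∀ᵐ u ∂μ, ContinuousAt ψ (t - u)) :
    HasDerivAt (fun τ => ∫ u, k u * (∫ x in 0..(τ - u), ψ x) ∂μ) (∫ u, k u * ψ (t - u) ∂μ) t := by
  set Q : ℝ → ℝ := fun x => ∫ y in 0..x, ψ y
  have hQlip (x y : ℝ) : |Q x - Q y| ≤ C * |x - y| := by
    rw [intervalIntegral.integral_interval_sub_left hψ.intervalIntegrable hψ.intervalIntegrable]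
    exact intervalIntegral.norm_integral_le_of_norm_le_const fun z _ =>
      (Real.norm_eq_abs _).trans_le (hψC z)
  have hQc : Continuous Q :=
    intervalIntegral.continuous_primitive (fun _ _ => hψ.intervalIntegrable) 0
  have hQbd (x : ℝ) : ‖Q x‖ ≤ ∫ y, ‖ψ y‖ :=
    intervalIntegral.norm_integral_le_integral_norm_uIoc.trans
      (setIntegral_le_integral hψ.norm (Eventually.of_forall fun _ => norm_nonneg _))
  have hQt : AEStronglyMeasurable (fun u => Q (t - u)) μ :=
    (hQc.comp (continuous_sub_left t)).aestronglyMeasurable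
  refine (hasDerivAt_integral_of_dominated_loc_of_lip (F := fun τ u => k u * Q (τ - u))
    (bound := fun u => C * |k u|) univ_mem
    (Eventually.of_forall fun τ =>
      hk.aestronglyMeasurable.mul (hQc.comp (continuous_sub_left τ)).aestronglyMeasurable)
    (hk.mul_bdd hQt (Eventually.of_forall fun u => hQbd (t - u)))
    (hk.aestronglyMeasurable.mul
      (hψm.comp (measurable_const.sub measurable_id)).aestronglyMeasurable)
    (Eventually.of_forall fun u => LipschitzOnWith.of_dist_le_mul fun x _ y _ => ?_)
    (hk.abs.const_mul C) ?_).2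
  · have hC : 0 ≤ C := (abs_nonneg _).trans (hψC 0)
    rw [Real.coe_nnabs, abs_of_nonneg (by positivity), Real.dist_eq, Real.dist_eq, ← mul_sub,
      abs_mul, mul_comm C, mul_assoc]
    gcongr
    simpa using hQlip (x - u) (y - u)
  · filter_upwards [hψt] with u hu
    exact ((intervalIntegral.integral_hasDerivAt_right hψ.intervalIntegrable
      hψm.stronglyMeasurable.stronglyMeasurableAtFilter hu).comp_sub_const t u).const_mul (k u)

theorem integral_mul_comp_sub_eq_integral_deriv_mul_primitive {K k φ : ℝ → ℝ} {τ : ℝ}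
    (hτ : 0 ≤ τ) (hK : ContinuousOn K (Icc 0 τ)) (hK0 : K 0 = 0)
    (hKk : ∀ u ∈ Ioo 0 τ, HasDerivAt K (k u) u) (hk : IntervalIntegrable k volume 0 τ)
    (hφ : Continuous φ) :
    ∫ u in 0..τ, K u * φ (τ - u) = ∫ u in 0..τ, k u * ∫ x in 0..(τ - u), φ x := by
  have hΦ (x : ℝ) : HasDerivAt (fun x => ∫ y in 0..x, φ y) (φ x) x :=
    intervalIntegral.integral_hasDerivAt_right (hφ.intervalIntegrable _ _)
      hφ.stronglyMeasurable.stronglyMeasurableAtFilter hφ.continuousAt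
  have hv (u : ℝ) : HasDerivAt (fun u => -∫ x in 0..(τ - u), φ x) (φ (τ - u)) u := by
    simpa [Function.comp_def] using
      ((hΦ (τ - u)).comp u ((hasDerivAt_id u).const_sub τ)).fun_neg
  have hparts := intervalIntegral.integral_mul_deriv_eq_deriv_mul_of_hasDerivAt
    (by rwa [uIcc_of_le hτ]) (fun u _ => (hv u).continuousAt.continuousWithinAt)
    (by simpa [hτ] using hKk) (fun u _ => hv u) hk
    ((hφ.comp (continuous_sub_left τ)).intervalIntegrable _ _)
  simpa [hK0, intervalIntegral.integral_neg] using hparts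

theorem setIntegral_Ioc_mul_comp_sub_eq {k f g : ℝ → ℝ} {b τ : ℝ} (hτ : 0 ≤ τ) (hτb : τ ≤ b)
    (hf0 : ∀ x < 0, f x = 0) (hfg : ∀ x ∈ Ioo 0 τ, f x = g x) :
    ∫ u in Ioc 0 b, k u * f (τ - u) = ∫ u in 0..τ, k u * g (τ - u) := by
  rw [setIntegral_eq_of_subset_of_forall_sdiff_eq_zero measurableSet_Ioc
      (Ioc_subset_Ioc_right hτb) fun u hu => ?_,
    intervalIntegral.integral_of_le hτ, integral_Ioc_eq_integral_Ioo,
    integral_Ioc_eq_integral_Ioo]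
  · refine setIntegral_congr_fun measurableSet_Ioo fun u hu => ?_
    rw [hfg _ ⟨by linarith [hu.2], by linarith [hu.1]⟩]
  · have hτu : τ < u := lt_of_not_ge fun hle => hu.2 ⟨hu.1.1, hle⟩
    rw [hf0 _ (by linarith), mul_zero]

/-- Truncating `φ` to `ψ = 𝟙_(0, b] φ` makes its primitive bounded and Lipschitz, and turns the
integral over `(0, τ)` into one over the fixed interval `(0, b]`, where
`hasDerivAt_integral_mul_primitive_comp_sub` applies. -/
theorem hasDerivAt_integral_primitive_mul_comp_sub {k φ : ℝ → ℝ} {b t : ℝ} (ht : t ∈ Ioo 0 b)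
    (hk : IntegrableOn k (Ioc 0 b)) (hkc : ContinuousOn k (Ioo 0 b)) (hφ : Continuous φ) :
    HasDerivAt (fun τ => ∫ u in 0..τ, (∫ v in 0..u, k v) * φ (τ - u))
      (∫ u in 0..t, k u * φ (t - u)) t := by
  set ψ := (Ioc 0 b).indicator φ
  obtain ⟨C, hC⟩ := isCompact_Icc.exists_bound_of_continuousOn (hφ.continuousOn (s := Icc 0 b))
  have hψC (x : ℝ) : |ψ x| ≤ C := by
    by_cases hx : x ∈ Ioc 0 b
    · simpa [ψ, hx] using hC x (Ioc_subset_Icc_self hx)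
    · simpa [ψ, hx] using (norm_nonneg _).trans (hC b ⟨ht.1.le.trans ht.2.le, le_rfl⟩)
  have hψ0 (x : ℝ) (hx : x ≤ 0) : ψ x = 0 := indicator_of_notMem (fun h => hx.not_gt h.1) _
  have hψφ (x : ℝ) (hx : x ∈ Ioc 0 b) : ψ x = φ x := indicator_of_mem hx _
  have hψt : ∀ᵐ u ∂(volume.restrict (Ioc 0 b)), ContinuousAt ψ (t - u) := by
    filter_upwards [ae_restrict_mem measurableSet_Ioc, ae_restrict_of_ae (Measure.ae_ne volume t)]
      with u hu hut
    rcases lt_or_gt_of_ne (sub_ne_zero.2 hut.symm) with hneg | hpos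
    · exact (continuousAt_const (y := (0 : ℝ))).congr <|
        (eventually_lt_nhds hneg).mono fun x hx => (hψ0 x hx.le).symm
    · exact hφ.continuousAt.congr <| eventually_of_mem
        (Ioo_mem_nhds hpos (show t - u < b by linarith [hu.1, ht.2]))
        fun x hx => (hψφ x (Ioo_subset_Ioc_self hx)).symm
  have hderiv := hasDerivAt_integral_mul_primitive_comp_sub hk
    ((hφ.integrableOn_Icc.mono_set Ioc_subset_Icc_self).integrable_indicator measurableSet_Ioc)
    (hφ.measurable.indicator measurableSet_Ioc) hψC hψt
  rw [setIntegral_Ioc_mul_comp_sub_eq ht.1.le ht.2.le (fun x hx => hψ0 x hx.le)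
    fun x hx => hψφ x ⟨hx.1, hx.2.le.trans ht.2.le⟩] at hderiv
  have hkI (u : ℝ) (hu : u ∈ Icc 0 b) : IntervalIntegrable k volume 0 u :=
    (intervalIntegrable_iff_integrableOn_Ioc_of_le hu.1).2 (hk.mono_set (Ioc_subset_Ioc_right hu.2))
  have hK (u : ℝ) (hu : u ∈ Ioo 0 b) : HasDerivAt (fun u => ∫ v in 0..u, k v) (k u) u :=
    intervalIntegral.integral_hasDerivAt_right (hkI u ⟨hu.1.le, hu.2.le⟩)
      (hkc.stronglyMeasurableAtFilter isOpen_Ioo u hu) (hkc.continuousAt (Ioo_mem_nhds hu.1 hu.2))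
  have hQ0 (x : ℝ) (hx : x < 0) : ∫ y in 0..x, ψ y = 0 := by
    rw [intervalIntegral.integral_congr_ae (g := fun _ => 0) (Eventually.of_forall fun y hy => ?_),
      intervalIntegral.integral_zero]
    rw [uIoc_of_ge hx.le] at hy
    exact hψ0 y hy.2
  have hQφ (x : ℝ) (hx : x ∈ Icc 0 b) : ∫ y in 0..x, ψ y = ∫ y in 0..x, φ y := by
    refine intervalIntegral.integral_congr_ae (Eventually.of_forall fun y hy => ?_)
    rw [uIoc_of_le hx.1] at hy
    exact hψφ y ⟨hy.1, hy.2.trans hx.2⟩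
  refine hderiv.congr_of_eventuallyEq ?_
  filter_upwards [Ioo_mem_nhds ht.1 ht.2] with τ hτ
  have hτI := hkI τ ⟨hτ.1.le, hτ.2.le⟩
  have hKc : ContinuousOn (fun u => ∫ v in 0..u, k v) (Icc 0 τ) := by
    simpa [uIcc_of_le hτ.1.le] using
      intervalIntegral.continuousOn_primitive_interval' hτI left_mem_uIcc
  rw [setIntegral_Ioc_mul_comp_sub_eq (f := fun x => ∫ y in 0..x, ψ y)
      (g := fun x => ∫ y in 0..x, φ y) hτ.1.le hτ.2.le hQ0
      (fun x hx => hQφ x ⟨hx.1.le, (hx.2.trans hτ.2).le⟩),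
    integral_mul_comp_sub_eq_integral_deriv_mul_primitive hτ.1.le hKc
      intervalIntegral.integral_same (fun u hu => hK u ⟨hu.1, hu.2.trans hτ.2⟩) hτI hφ]

theorem eq_integral_of_hasDerivAt_of_tendsto_nhdsGT_zero {H k : ℝ → ℝ} {u : ℝ} (hu : 0 < u)
    (hH : ∀ v ∈ Ioc 0 u, HasDerivAt H (k v) v) (hH0 : Tendsto H (𝓝[>] 0) (𝓝 0))
    (hk : IntervalIntegrable k volume 0 u) :
    H u = ∫ v in 0..u, k v := by
  rw [intervalIntegral.integral_eq_sub_of_hasDerivAt_of_tendsto hu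
    (fun v hv => hH v ⟨hv.1, hv.2.le⟩) hk hH0
    ((hH u ⟨hu, le_rfl⟩).continuousAt.tendsto.mono_left nhdsWithin_le_nhds), sub_zero]

theorem intervalIntegrable_comp_neg_of_integrableOn_Ico {f : ℝ → ℝ} {b : ℝ} (hb : 0 ≤ b)
    (hf : IntegrableOn f (Ico (-b) 0)) : IntervalIntegrable (fun u => f (-u)) volume 0 b := by
  simpa using ((IntervalIntegrable.iff_comp_neg (f := f)).1
    ((intervalIntegrable_iff_integrableOn_Ico_of_le (by linarith)).2 hf)).symm

theorem hasDerivAt_integral_comp_sub_mul {h h' φ : ℝ → ℝ} {b t : ℝ} (ht : t ∈ Ioo 0 b)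
    (hderiv : ∀ x ∈ Ioo (-b) 0, HasDerivAt h (h' x) x) (hcont : ContinuousOn h' (Ioo (-b) 0))
    (hlim : Tendsto h (𝓝[<] 0) (𝓝 0)) (hint : IntegrableOn h' (Ico (-b) 0))
    (hφ : Continuous φ) :
    HasDerivAt (fun τ => ∫ s in 0..τ, h (s - τ) * φ s) (∫ u in 0..t, -h' (-u) * φ (t - u)) t := by
  have hb : 0 ≤ b := ht.1.le.trans ht.2.le
  have hk : IntegrableOn (fun u => -h' (-u)) (Ioc 0 b) :=
    (intervalIntegrable_iff_integrableOn_Ioc_of_le hb).1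
      (intervalIntegrable_comp_neg_of_integrableOn_Ico hb hint).neg
  have hrep (u : ℝ) (hu : u ∈ Ioo 0 b) : h (-u) = ∫ v in 0..u, -h' (-v) :=
    eq_integral_of_hasDerivAt_of_tendsto_nhdsGT_zero (H := fun u => h (-u)) hu.1
      (fun v hv => by
        have hv' : -v ∈ Ioo (-b) 0 := ⟨by linarith [hv.2, hu.2], by linarith [hv.1]⟩
        simpa [Function.comp_def] using (hderiv (-v) hv').comp v (hasDerivAt_neg v))
      (by simpa [Function.comp_def] using hlim.comp (tendsto_neg_nhdsGT_neg (a := (0 : ℝ))))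
      ((intervalIntegrable_iff_integrableOn_Ioc_of_le hu.1.le).2
        (hk.mono_set (Ioc_subset_Ioc_right hu.2.le)))
  have hkc : ContinuousOn (fun u => -h' (-u)) (Ioo 0 b) :=
    (hcont.comp continuous_neg.continuousOn fun u hu => ⟨neg_lt_neg hu.2, neg_lt_zero.2 hu.1⟩).neg
  refine (hasDerivAt_integral_primitive_mul_comp_sub ht hk hkc hφ).congr_of_eventuallyEq ?_
  filter_upwards [Ioo_mem_nhds ht.1 ht.2] with τ hτ
  have hsub := intervalIntegral.integral_comp_sub_left (a := 0) (b := τ)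
    (fun s => h (s - τ) * φ s) τ
  simp only [sub_sub_cancel_left, sub_self, sub_zero] at hsub
  rw [← hsub]
  refine intervalIntegral.integral_congr_ae (Eventually.of_forall fun u hu => ?_)
  rw [uIoc_of_le hτ.1.le] at hu
  rw [hrep u ⟨hu.1, hu.2.trans_lt hτ.2⟩]

theorem integrableOn_Ico_of_continuousOn_Iio {f : ℝ → ℝ} {a b c : ℝ} (hab : a ≤ b) (hbc : b < c)
    (hf : ContinuousOn f (Iio c)) (hint : IntegrableOn f (Ico b c)) :
    IntegrableOn f (Ico a c) := by
  rw [← Icc_union_Ico_eq_Ico hab hbc]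
  exact ((hf.mono fun x hx => hx.2.trans_lt hbc).integrableOn_Icc).union hint

theorem abs_integral_mul_comp_sub_le {k φ : ℝ → ℝ} {t M : ℝ} (ht : 0 ≤ t)
    (hk : IntervalIntegrable k volume 0 t) (hφ : ∀ x ∈ Ico 0 t, |φ x| ≤ M) :
    |∫ u in 0..t, k u * φ (t - u)| ≤ M * ∫ u in 0..t, |k u| := by
  rw [← intervalIntegral.integral_const_mul M fun u => |k u|]
  refine intervalIntegral.norm_integral_le_of_norm_le (f := fun u => k u * φ (t - u)) ht
    (Eventually.of_forall fun u hu => ?_) (hk.abs.const_mul M)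
  rw [Real.norm_eq_abs, abs_mul, mul_comm]
  exact mul_le_mul_of_nonneg_right (hφ _ ⟨by linarith [hu.2], by linarith [hu.1]⟩) (abs_nonneg _)

theorem stmt13 (h h' φ : ℝ → ℝ)
    (hderiv : ∀ t < (0:ℝ), HasDerivAt h (h' t) t)
    (hcont : ContinuousOn h' (Set.Iio 0))
    (hlim : Filter.Tendsto h (nhdsWithin 0 (Set.Iio 0)) (nhds 0))
    (hint : IntegrableOn h' (Set.Ico (-1:ℝ) 0))
    (hφc : Continuous φ) :
    ∃ Ψ : ℝ → ℝ, ∀ t ∈ Set.Ioc (0:ℝ) 1,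
      HasDerivAt (fun τ => ∫ s in (0:ℝ)..τ, h (s - τ) * φ s) (Ψ t) t ∧
      |Ψ t| ≤ (sSup ((fun s => |φ s|) '' Set.Icc 0 1)) * ∫ u in (0:ℝ)..t, |h' (-u)| ∧
      (sSup ((fun s => |φ s|) '' Set.Icc 0 1)) * (∫ u in (0:ℝ)..t, |h' (-u)|) ≤
        (sSup ((fun s => |φ s|) '' Set.Icc 0 1)) * ∫ u in (0:ℝ)..1, |h' (-u)| := by
  set M := sSup ((fun s => |φ s|) '' Icc 0 1)
  have hM (x : ℝ) (hx : x ∈ Icc 0 1) : |φ x| ≤ M :=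
    le_csSup (isCompact_Icc.bddAbove_image (continuous_abs.comp hφc).continuousOn)
      (mem_image_of_mem _ hx)
  have hM0 : 0 ≤ M := (abs_nonneg _).trans (hM 0 ⟨le_rfl, zero_le_one⟩)
  have hint₂ : IntegrableOn h' (Ico (-2) 0) :=
    integrableOn_Ico_of_continuousOn_Iio (by norm_num) (by norm_num) hcont hint
  have hkI (t : ℝ) (ht : t ∈ Icc 0 1) : IntervalIntegrable (fun u => h' (-u)) volume 0 t :=
    (intervalIntegrable_comp_neg_of_integrableOn_Ico zero_le_one hint).mono_set <| by
      rw [uIcc_of_le ht.1, uIcc_of_le zero_le_one]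
      exact Icc_subset_Icc_right ht.2
  refine ⟨fun t => ∫ u in 0..t, -h' (-u) * φ (t - u), fun t ⟨ht0, ht1⟩ => ⟨?_, ?_, ?_⟩⟩
  · exact hasDerivAt_integral_comp_sub_mul ⟨ht0, by linarith⟩ (fun x hx => hderiv x hx.2)
      (hcont.mono Ioo_subset_Iio_self) hlim hint₂ hφc
  · simpa only [abs_neg] using abs_integral_mul_comp_sub_le (k := fun u => -h' (-u)) ht0.le
      (hkI t ⟨ht0.le, ht1⟩).neg fun x hx => hM x ⟨hx.1, hx.2.le.trans ht1⟩
  · exact mul_le_mul_of_nonneg_left (intervalIntegral.integral_mono_interval le_rfl ht0.le ht1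
      (Eventually.of_forall fun _ => abs_nonneg _) (hkI 1 ⟨zero_le_one, le_rfl⟩).abs) hM0
end

section
/- Let α > −1/2 and t ≥ 1. Then ∫_1^∞ (∫_1^t e^{u−t} (u+s)^{−(α+1)} du)² ds is bounded uniformly in t ∈ [1, ∞): there exists C > 0 independent of t such that ∫_1^∞ (∫_1^t e^{u−t} (u+s)^{−(α+1)} du)² ds ≤ C. -/
open MeasureTheory

theorem stmt15 (α : ℝ) (hα : -(1/2 : ℝ) < α) :
    ∃ C > 0, ∀ t ≥ (1:ℝ),
      ∫ s in Set.Ioi (1:ℝ),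
        (∫ u in (1:ℝ)..t, Real.exp (u - t) * (u + s) ^ (-(α+1))) ^ 2 ≤ C := by
  have hexp : -(2*α+2) < -1 := by linarith
  have hInt : IntegrableOn (fun s : ℝ => s ^ (-(2*α+2))) (Set.Ioi 1) :=
    integrableOn_Ioi_rpow_of_lt hexp one_pos
  have hInt' : IntegrableOn (fun s : ℝ => (s ^ (-(α+1))) ^ 2) (Set.Ioi 1) := by
    refine hInt.congr_fun (fun s hs => ?_) measurableSet_Ioi
    have hs0 : (0:ℝ) ≤ s := le_of_lt (lt_trans one_pos hs)
    rw [← Real.rpow_natCast (s ^ (-(α+1))) 2, ← Real.rpow_mul hs0]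
    norm_num
    ring_nf
  refine ⟨∫ s in Set.Ioi (1:ℝ), (s ^ (-(α+1))) ^ 2, ?_, ?_⟩
  · have : (∫ s in Set.Ioi (1:ℝ), (s ^ (-(α+1))) ^ 2)
        = ∫ s in Set.Ioi (1:ℝ), s ^ (-(2*α+2)) := by
      refine setIntegral_congr_fun measurableSet_Ioi (fun s hs => ?_)
      have hs0 : (0:ℝ) ≤ s := le_of_lt (lt_trans one_pos hs)
      rw [← Real.rpow_natCast (s ^ (-(α+1))) 2, ← Real.rpow_mul hs0]
      norm_num
      ring_nf
    rw [this, integral_Ioi_rpow_of_lt hexp one_pos]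
    rw [Real.one_rpow]
    have : -(2*α+2) + 1 < 0 := by linarith
    exact div_pos_of_neg_of_neg (by norm_num) this
  · intro t ht
    refine integral_mono_of_nonneg ?_ hInt' ?_
    · filter_upwards with s
      positivity
    · filter_upwards [ae_restrict_mem measurableSet_Ioi] with s hs
      have hs1 : (1:ℝ) < s := hs
      have hs0 : (0:ℝ) < s := lt_trans one_pos hs1
      have hI0 : 0 ≤ ∫ u in (1:ℝ)..t, Real.exp (u - t) * (u + s) ^ (-(α+1)) := by
        apply intervalIntegral.integral_nonneg ht
        intro u hu
        have : (0:ℝ) < u + s := by linarith [hu.1]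
        positivity
      have hIle : (∫ u in (1:ℝ)..t, Real.exp (u - t) * (u + s) ^ (-(α+1)))
          ≤ s ^ (-(α+1)) := by
        have hmono : (∫ u in (1:ℝ)..t, Real.exp (u - t) * (u + s) ^ (-(α+1)))
            ≤ ∫ u in (1:ℝ)..t, Real.exp (u - t) * s ^ (-(α+1)) := by
          apply intervalIntegral.integral_mono_on ht
          · apply ContinuousOn.intervalIntegrable
            apply ContinuousOn.mul
            · exact (Real.continuous_exp.comp (continuous_id.sub continuous_const)).continuousOn
            · apply ContinuousOn.rpow_const
              · exact (continuous_id.add continuous_const).continuousOn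
              · intro u hu
                left
                rw [Set.uIcc_of_le ht] at hu
                have : (0:ℝ) < u + s := by linarith [hu.1]
                exact ne_of_gt this
          · apply ContinuousOn.intervalIntegrable
            exact ((Real.continuous_exp.comp (continuous_id.sub continuous_const)).mul
              continuous_const).continuousOn
          · intro u hu
            have hus : s ≤ u + s := by linarith [hu.1]
            have := Real.rpow_le_rpow_of_nonpos hs0 hus (by linarith : -(α+1) ≤ 0)
            exact mul_le_mul_of_nonneg_left this (Real.exp_nonneg _)
        have hcalc : (∫ u in (1:ℝ)..t, Real.exp (u - t) * s ^ (-(α+1)))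
            = (1 - Real.exp (1 - t)) * s ^ (-(α+1)) := by
          rw [intervalIntegral.integral_mul_const]
          congr 1
          rw [intervalIntegral.integral_comp_sub_right (fun x => Real.exp x) t]
          rw [integral_exp, sub_self, Real.exp_zero]
        have hle1 : (1 - Real.exp (1 - t)) * s ^ (-(α+1)) ≤ s ^ (-(α+1)) := by
          have h1 : 1 - Real.exp (1 - t) ≤ 1 := by
            linarith [Real.exp_pos (1 - t)]
          have h2 : (0:ℝ) ≤ s ^ (-(α+1)) := Real.rpow_nonneg hs0.le _
          nlinarith
        linarith [hmono, hcalc ▸ hmono]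
      calc (∫ u in (1:ℝ)..t, Real.exp (u - t) * (u + s) ^ (-(α+1))) ^ 2
          ≤ (s ^ (-(α+1))) ^ 2 := by
            apply sq_le_sq'
            · linarith [Real.rpow_nonneg hs0.le (-(α+1))]
            · exact hIle
end
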